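/- Let $A$, $B$ be graded $\mathbb{Q}$-algebras, $\pi \colon A \to B$ a surjective graded algebra homomorphism admitting a graded algebra section $s$ (so $\pi \circ s = \mathrm{id}_B$), and assume $\pi|_{A^1}$ is injective. Let $T \subseteq A$ be any subset contained in the image of $s$, and let $R \subseteq A$ be the $\mathbb{Q}$-subalgebra generated by $A^1 \cup T$. Then the restriction $\pi|_R \colon R \to B$ is injective. -/
import Mathlib

/-- Section Property implies the weak splitting property: if `π` has a graded
algebra section `s`, `π` is injective on `A¹`, and `T` is contained in the
image of `s`, then `π` is injective on the subalgebra generated by `A¹ ∪ T`. -/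
theorem stmt_7 {A B : Type*} [CommRing A] [CommRing B] [Algebra ℚ A] [Algebra ℚ B]
    (A1 : Submodule ℚ A) (B1 : Submodule ℚ B)
    (π : A →ₐ[ℚ] B) (hsurj : Function.Surjective π)
    (hπgr : ∀ a ∈ A1, π a ∈ B1)
    (s : B →ₐ[ℚ] A) (hsgr : ∀ b ∈ B1, s b ∈ A1)
    (hsec : ∀ b, π (s b) = b)
    (hinj : ∀ a ∈ A1, ∀ a' ∈ A1, π a = π a' → a = a')
    (T : Set A) (hT : ∀ x ∈ T, ∃ b, s b = x) :
    ∀ x ∈ Algebra.adjoin ℚ ((A1 : Set A) ∪ T),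
      ∀ y ∈ Algebra.adjoin ℚ ((A1 : Set A) ∪ T), π x = π y → x = y := by
  have hsub : Algebra.adjoin ℚ ((A1 : Set A) ∪ T) ≤ s.range := by
    apply Algebra.adjoin_le
    rintro a (ha | ha)
    · exact ⟨π a, hinj _ (hsgr _ (hπgr a ha)) a ha (hsec _)⟩
    · obtain ⟨b, hb⟩ := hT a ha
      exact ⟨b, hb⟩
  intro x hx y hy h
  obtain ⟨bx, rfl⟩ := hsub hx
  obtain ⟨by', rfl⟩ := hsub hy
  exact congrArg s (by rw [← hsec bx, ← hsec by']; exact h)
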